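/- arXiv:1410.3140 — 2 statements merged into one kernel-verified Lean document; each statement's English description precedes it below -/
import Mathlib

section
/- The functor F from (A ⊗ S^op)-modules to (B ⊗ B^op)-modules sending X to the bimodule [[0,0],[X,0]] is naturally isomorphic to Bε ⊗_A (−) ⊗_S (1−ε)B; it is exact, fully faithful, and sends projective objects to projective objects. -/
set_option linter.unusedSectionVars false
set_option maxHeartbeats 1000000
set_option synthInstance.maxHeartbeats 400000

open MulOpposite
open scoped TensorProduct

universe u

noncomputable section

open scoped TensorProduct
open MulOpposite

namespace NC

noncomputable section

universe w v

variable (k : Type w) [CommRing k] (B : Type u) [Ring B]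
variable (M N : Type v) [AddCommGroup M] [AddCommGroup N] [Module k M] [Module k N]
variable [Module Bᵐᵒᵖ M] [Module B N]

/-- The defining relations of the balanced tensor product `M ⊗_B N`. -/
def rel : Submodule k (TensorProduct k M N) :=
  Submodule.span k
    {z | ∃ (b : B) (m : M) (n : N), z = (op b • m) ⊗ₜ[k] n - m ⊗ₜ[k] (b • n)}

/-- The balanced tensor product `M ⊗_B N` of a right `B`-module `M` and a left
`B`-module `N` over the noncommutative ring `B`, as a quotient of `M ⊗[k] N`. -/
def Tensor := TensorProduct k M N ⧸ rel k B M N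

instance : AddCommGroup (Tensor k B M N) :=
  inferInstanceAs (AddCommGroup (TensorProduct k M N ⧸ rel k B M N))

instance : Module k (Tensor k B M N) :=
  inferInstanceAs (Module k (TensorProduct k M N ⧸ rel k B M N))

variable {M N}

/-- The canonical image of `m ⊗ n` in `M ⊗_B N`. -/
def mk (m : M) (n : N) : Tensor k B M N :=
  Submodule.Quotient.mk (m ⊗ₜ[k] n)

lemma mk_balanced (b : B) (m : M) (n : N) : mk k B (op b • m) n = mk k B m (b • n) := by
  exact (Submodule.Quotient.eq _).mpr (Submodule.subset_span ⟨b, m, n, rfl⟩)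

lemma mk_add_left (m m' : M) (n : N) : mk k B (m + m') n = mk k B m n + mk k B m' n := by
  simp [mk, TensorProduct.add_tmul, Submodule.Quotient.mk_add]; rfl

lemma mk_add_right (m : M) (n n' : N) : mk k B m (n + n') = mk k B m n + mk k B m n' := by
  simp [mk, TensorProduct.tmul_add, Submodule.Quotient.mk_add]; rfl

lemma smul_mk_k (c : k) (m : M) (n : N) : c • mk k B m n = mk k B (c • m) n := by
  exact (congrArg (Submodule.Quotient.mk (p := rel k B M N))
    (TensorProduct.smul_tmul' c m n)).symm

lemma smul_mk_k' (c : k) (m : M) (n : N) : c • mk k B m n = mk k B m (c • n) := by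
  exact (congrArg (Submodule.Quotient.mk (p := rel k B M N))
    (TensorProduct.tmul_smul c m n)).symm

lemma mk_zero_left (n : N) : mk k B (0 : M) n = 0 := by
  simp [mk, TensorProduct.zero_tmul]; rfl

lemma mk_zero_right (m : M) : mk k B m (0 : N) = 0 := by
  simp [mk, TensorProduct.tmul_zero]; rfl

lemma induction_on {p : Tensor k B M N → Prop} (t : Tensor k B M N)
    (zero : p 0) (basic : ∀ m n, p (mk k B m n))
    (add : ∀ x y, p x → p y → p (x + y)) : p t := by
  obtain ⟨x, rfl⟩ := Submodule.Quotient.mk_surjective _ t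
  induction x using TensorProduct.induction_on with
  | zero => exact zero
  | tmul m n => exact basic m n
  | add x y hx hy => rw [Submodule.Quotient.mk_add]; exact add _ _ hx hy

section Lift

variable {P : Type v} [AddCommGroup P] [Module k P]

/-- Lift a balanced `k`-bilinear map to the balanced tensor product. -/
def lift (f : M →ₗ[k] N →ₗ[k] P)
    (hf : ∀ (b : B) (m : M) (n : N), f (op b • m) n = f m (b • n)) :
    Tensor k B M N →ₗ[k] P :=
  Submodule.liftQ _ (TensorProduct.lift f) (by
    rw [rel, Submodule.span_le]
    rintro z ⟨b, m, n, rfl⟩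
    simp [LinearMap.mem_ker, hf b m n])

@[simp] lemma lift_mk (f : M →ₗ[k] N →ₗ[k] P) (hf) (m : M) (n : N) :
    lift k B f hf (mk k B m n) = f m n := rfl

end Lift

section LeftAction

variable (A : Type u) [Ring A] [Module A M]
variable [SMulCommClass A Bᵐᵒᵖ M] [SMulCommClass A k M]

/-- The `k`-linear endomorphism of `M` given by the action of `a : A`. -/
def actL (a : A) : M →ₗ[k] M where
  toFun m := a • m
  map_add' := smul_add a
  map_smul' c m := (smul_comm a c m)

variable (N)

lemma relLe (a : A) :
    rel k B M N ≤ Submodule.comap (LinearMap.rTensor N (actL k A a)) (rel k B M N) := by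
  rw [rel, Submodule.span_le]
  rintro z ⟨b, m, n, rfl⟩
  simp only [SetLike.mem_coe, Submodule.mem_comap, map_sub, LinearMap.rTensor_tmul]
  refine Submodule.subset_span ⟨b, a • m, n, ?_⟩
  have h1 : actL k A a (op b • m) = op b • (a • m) := smul_comm a (op b) m
  have h2 : actL k A a m = a • m := rfl
  rw [h1, h2]

/-- The action of `a : A` on `M ⊗_B N`. -/
def actLQ (a : A) : Tensor k B M N →ₗ[k] Tensor k B M N :=
  Submodule.mapQ _ _ (LinearMap.rTensor N (actL k A a)) (relLe k B N A a)

lemma actLQ_mk (a : A) (m : M) (n : N) :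
    actLQ k B N A a (mk k B m n) = mk k B (a • m) n := rfl

/-- The ring homomorphism `A → End_k (M ⊗_B N)` defining the left `A`-module structure. -/
def actLRingHom : A →+* Module.End k (Tensor k B M N) where
  toFun := actLQ k B N A
  map_one' := by
    refine Submodule.linearMap_qext _ (TensorProduct.ext' fun m n => ?_)
    show actLQ k B N A 1 (mk k B m n) = mk k B m n
    rw [actLQ_mk, one_smul]
  map_mul' x y := by
    refine Submodule.linearMap_qext _ (TensorProduct.ext' fun m n => ?_)
    show actLQ k B N A (x * y) (mk k B m n) = actLQ k B N A x (actLQ k B N A y (mk k B m n))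
    rw [actLQ_mk, actLQ_mk, actLQ_mk, mul_smul]
  map_zero' := by
    refine Submodule.linearMap_qext _ (TensorProduct.ext' fun m n => ?_)
    show actLQ k B N A 0 (mk k B m n) = 0
    rw [actLQ_mk, zero_smul, mk_zero_left]
  map_add' x y := by
    refine Submodule.linearMap_qext _ (TensorProduct.ext' fun m n => ?_)
    show actLQ k B N A (x + y) (mk k B m n)
        = actLQ k B N A x (mk k B m n) + actLQ k B N A y (mk k B m n)
    rw [actLQ_mk, actLQ_mk, actLQ_mk, add_smul, mk_add_left]

variable (M)

/-- The left `A`-module structure on `M ⊗_B N` induced by the left `A`-action on `M`. -/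
def leftModule : Module A (Tensor k B M N) :=
  Module.compHom (Tensor k B M N) (actLRingHom k B N A (M := M))

attribute [local instance] leftModule

lemma smul_mk_left (a : A) (m : M) (n : N) :
    a • mk k B m n = mk k B (a • m) n := rfl

instance : SMulCommClass A k (Tensor k B M N) where
  smul_comm a c t := by
    induction t using induction_on with
    | zero => simp
    | basic m n => rw [smul_mk_k, smul_mk_left, smul_mk_left, smul_mk_k, smul_comm]
    | add x y hx hy => simp [smul_add, hx, hy]

instance : SMulCommClass k A (Tensor k B M N) := SMulCommClass.symm _ _ _

end LeftAction

section RightAction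

variable (C : Type u) [Ring C] [Module Cᵐᵒᵖ N]
variable [SMulCommClass Cᵐᵒᵖ B N] [SMulCommClass Cᵐᵒᵖ k N]

/-- The `k`-linear endomorphism of `N` given by the right action of `c : C`. -/
def actR (c : Cᵐᵒᵖ) : N →ₗ[k] N where
  toFun n := c • n
  map_add' := smul_add c
  map_smul' d n := (smul_comm c d n)

variable (M)

lemma relLeR (c : Cᵐᵒᵖ) :
    rel k B M N ≤ Submodule.comap (LinearMap.lTensor M (actR k C c)) (rel k B M N) := by
  rw [rel, Submodule.span_le]
  rintro z ⟨b, m, n, rfl⟩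
  simp only [SetLike.mem_coe, Submodule.mem_comap, map_sub, LinearMap.lTensor_tmul]
  refine Submodule.subset_span ⟨b, m, c • n, ?_⟩
  have h1 : actR k C c (b • n) = b • (c • n) := smul_comm c b n
  have h2 : actR k C c n = c • n := rfl
  rw [h1, h2]

/-- The right action of `c : C` on `M ⊗_B N`. -/
def actRQ (c : Cᵐᵒᵖ) : Tensor k B M N →ₗ[k] Tensor k B M N :=
  Submodule.mapQ _ _ (LinearMap.lTensor M (actR k C c)) (relLeR k B M C c)

lemma actRQ_mk (c : Cᵐᵒᵖ) (m : M) (n : N) :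
    actRQ k B M C c (mk k B m n) = mk k B m (c • n) := rfl

/-- The ring homomorphism `Cᵐᵒᵖ → End_k (M ⊗_B N)` defining the right `C`-module structure. -/
def actRRingHom : Cᵐᵒᵖ →+* Module.End k (Tensor k B M N) where
  toFun := actRQ k B M C
  map_one' := by
    refine Submodule.linearMap_qext _ (TensorProduct.ext' fun m n => ?_)
    show actRQ k B M C 1 (mk k B m n) = mk k B m n
    rw [actRQ_mk, one_smul]
  map_mul' x y := by
    refine Submodule.linearMap_qext _ (TensorProduct.ext' fun m n => ?_)
    show actRQ k B M C (x * y) (mk k B m n) = actRQ k B M C x (actRQ k B M C y (mk k B m n))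
    rw [actRQ_mk, actRQ_mk, actRQ_mk, mul_smul]
  map_zero' := by
    refine Submodule.linearMap_qext _ (TensorProduct.ext' fun m n => ?_)
    show actRQ k B M C 0 (mk k B m n) = 0
    rw [actRQ_mk, zero_smul, mk_zero_right]
  map_add' x y := by
    refine Submodule.linearMap_qext _ (TensorProduct.ext' fun m n => ?_)
    show actRQ k B M C (x + y) (mk k B m n)
        = actRQ k B M C x (mk k B m n) + actRQ k B M C y (mk k B m n)
    rw [actRQ_mk, actRQ_mk, actRQ_mk, add_smul, mk_add_right]

/-- The right `C`-module structure on `M ⊗_B N` induced by the right `C`-action on `N`. -/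
def rightModule : Module Cᵐᵒᵖ (Tensor k B M N) :=
  Module.compHom (Tensor k B M N) (actRRingHom k B M C (N := N))

attribute [local instance] rightModule

lemma smul_mk_right (c : Cᵐᵒᵖ) (m : M) (n : N) :
    c • mk k B m n = mk k B m (c • n) := rfl

instance : SMulCommClass Cᵐᵒᵖ k (Tensor k B M N) where
  smul_comm c d t := by
    induction t using induction_on with
    | zero => simp
    | basic m n =>
        rw [smul_mk_k, smul_mk_right, smul_mk_right, smul_mk_k]
    | add x y hx hy => simp [smul_add, hx, hy]

instance : SMulCommClass k Cᵐᵒᵖ (Tensor k B M N) := SMulCommClass.symm _ _ _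

end RightAction

section Bimodule

variable (A C : Type u) [Ring A] [Ring C] [Module A M] [Module Cᵐᵒᵖ N]
variable [SMulCommClass A Bᵐᵒᵖ M] [SMulCommClass A k M]
variable [SMulCommClass Cᵐᵒᵖ B N] [SMulCommClass Cᵐᵒᵖ k N]

attribute [local instance] leftModule rightModule

instance : SMulCommClass A Cᵐᵒᵖ (Tensor k B M N) where
  smul_comm a c t := by
    induction t using induction_on with
    | zero => simp
    | basic m n =>
        simp only [smul_mk_right k B M C, smul_mk_left k B M N A]
    | add x y hx hy => simp [smul_add, hx, hy]

section Tower

variable [Algebra k A] [Module k M] [IsScalarTower k A M]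

instance : IsScalarTower k A (Tensor k B M N) where
  smul_assoc c a t := by
    induction t using induction_on with
    | zero => simp
    | basic m n =>
        simp only [smul_mk_left k B M N A, smul_mk_k, smul_assoc]
    | add x y hx hy => simp [smul_add, hx, hy]

end Tower

section TowerR

variable [Algebra k C] [IsScalarTower k Cᵐᵒᵖ N]

instance : IsScalarTower k Cᵐᵒᵖ (Tensor k B M N) where
  smul_assoc c a t := by
    induction t using induction_on with
    | zero => simp
    | basic m n =>
        simp only [smul_mk_right k B M C, smul_mk_k', smul_assoc]
    | add x y hx hy => simp [smul_add, hx, hy]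

end TowerR

end Bimodule

end

end NC


open MulOpposite


/-- The lower triangular matrix algebra `[[S, 0], [M, A]]` associated to rings `S`, `A`
and an `(A, S)`-bimodule `M`. -/
@[ext] structure Tri (S M A : Type u) where
  s : S
  m : M
  a : A

namespace Tri

variable {S M A : Type u} [Ring S] [Ring A] [AddCommGroup M]
variable [Module A M] [Module Sᵐᵒᵖ M] [SMulCommClass A Sᵐᵒᵖ M]

instance : Zero (Tri S M A) := ⟨⟨0, 0, 0⟩⟩
instance : Add (Tri S M A) := ⟨fun x y => ⟨x.s + y.s, x.m + y.m, x.a + y.a⟩⟩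
instance : Neg (Tri S M A) := ⟨fun x => ⟨-x.s, -x.m, -x.a⟩⟩
instance : One (Tri S M A) := ⟨⟨1, 0, 1⟩⟩
instance : Mul (Tri S M A) :=
  ⟨fun x y => ⟨x.s * y.s, op y.s • x.m + x.a • y.m, x.a * y.a⟩⟩

@[simp] lemma zero_s : (0 : Tri S M A).s = 0 := rfl
@[simp] lemma zero_m : (0 : Tri S M A).m = 0 := rfl
@[simp] lemma zero_a : (0 : Tri S M A).a = 0 := rfl
@[simp] lemma add_s (x y : Tri S M A) : (x + y).s = x.s + y.s := rfl
@[simp] lemma add_m (x y : Tri S M A) : (x + y).m = x.m + y.m := rfl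
@[simp] lemma add_a (x y : Tri S M A) : (x + y).a = x.a + y.a := rfl
@[simp] lemma neg_s (x : Tri S M A) : (-x).s = -x.s := rfl
@[simp] lemma neg_m (x : Tri S M A) : (-x).m = -x.m := rfl
@[simp] lemma neg_a (x : Tri S M A) : (-x).a = -x.a := rfl
@[simp] lemma one_s : (1 : Tri S M A).s = 1 := rfl
@[simp] lemma one_m : (1 : Tri S M A).m = 0 := rfl
@[simp] lemma one_a : (1 : Tri S M A).a = 1 := rfl
@[simp] lemma mul_s (x y : Tri S M A) : (x * y).s = x.s * y.s := rfl
@[simp] lemma mul_m (x y : Tri S M A) : (x * y).m = op y.s • x.m + x.a • y.m := rfl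
@[simp] lemma mul_a (x y : Tri S M A) : (x * y).a = x.a * y.a := rfl

instance : AddCommGroup (Tri S M A) where
  add_assoc x y z := by ext <;> simp [add_assoc]
  zero_add x := by ext <;> simp
  add_zero x := by ext <;> simp
  neg_add_cancel x := by ext <;> simp
  add_comm x y := by ext <;> simp [add_comm]
  nsmul := nsmulRec
  zsmul := zsmulRec

instance : Ring (Tri S M A) where
  __ := (inferInstance : AddCommGroup (Tri S M A))
  mul_assoc x y z := by
    ext <;> simp [mul_assoc, mul_smul, smul_add, smul_comm, add_assoc]
  one_mul x := by ext <;> simp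
  mul_one x := by ext <;> simp
  left_distrib x y z := by ext <;> (simp [mul_add, smul_add, add_smul]; try abel)
  right_distrib x y z := by ext <;> (simp [add_mul, smul_add, add_smul]; try abel)
  zero_mul x := by ext <;> simp
  mul_zero x := by ext <;> simp

@[simp] lemma sub_s (x y : Tri S M A) : (x - y).s = x.s - y.s := by
  change (x + -y).s = _; rw [add_s, neg_s, sub_eq_add_neg]

@[simp] lemma sub_m (x y : Tri S M A) : (x - y).m = x.m - y.m := by
  change (x + -y).m = _; rw [add_m, neg_m, sub_eq_add_neg]

@[simp] lemma sub_a (x y : Tri S M A) : (x - y).a = x.a - y.a := by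
  change (x + -y).a = _; rw [add_a, neg_a, sub_eq_add_neg]

/-- The idempotent `ε = [[0,0],[0,1]]`. -/
def eps : Tri S M A := ⟨0, 0, 1⟩

@[simp] lemma eps_s : (eps : Tri S M A).s = 0 := rfl
@[simp] lemma eps_m : (eps : Tri S M A).m = 0 := rfl
@[simp] lemma eps_a : (eps : Tri S M A).a = 1 := rfl

lemma eps_idem : (eps : Tri S M A) * eps = eps := by ext <;> simp

/-- The (non-unital) embedding of `A` in the lower right corner. -/
def iota (a : A) : Tri S M A := ⟨0, 0, a⟩

@[simp] lemma iota_s (a : A) : (iota a : Tri S M A).s = 0 := rfl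
@[simp] lemma iota_m (a : A) : (iota a : Tri S M A).m = 0 := rfl
@[simp] lemma iota_a (a : A) : (iota a : Tri S M A).a = a := rfl

section Alg

variable (k : Type u) [CommRing k] [Algebra k S] [Algebra k A] [Module k M]
variable [IsScalarTower k A M] [IsScalarTower k Sᵐᵒᵖ M]

/-- The canonical ring homomorphism `k → Tri S M A`. -/
def algMap : k →+* Tri S M A where
  toFun c := ⟨algebraMap k S c, 0, algebraMap k A c⟩
  map_one' := by ext <;> simp
  map_mul' x y := by ext <;> simp
  map_zero' := by ext <;> simp
  map_add' x y := by ext <;> simp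

instance : Algebra k (Tri S M A) :=
  RingHom.toAlgebra' (algMap k) (by
    intro c x
    ext
    · simp [algMap, Algebra.commutes]
    · show op x.s • (0 : M) + algebraMap k A c • x.m = op (algebraMap k S c) • x.m + x.a • 0
      rw [smul_zero, smul_zero, zero_add, add_zero, ← MulOpposite.algebraMap_apply,
        algebraMap_smul, algebraMap_smul]
    · simp [algMap, Algebra.commutes])

end Alg

end Tri

section Corner

variable (S A M : Type u) [Ring S] [Ring A] [AddCommGroup M]
variable [Module A M] [Module Sᵐᵒᵖ M] [SMulCommClass A Sᵐᵒᵖ M]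

@[simp] lemma iota_mul (a b : A) :
    (Tri.iota (a * b) : Tri S M A) = Tri.iota a * Tri.iota b := by ext <;> simp

@[simp] lemma iota_add (a b : A) :
    (Tri.iota (a + b) : Tri S M A) = Tri.iota a + Tri.iota b := by ext <;> simp

@[simp] lemma iota_zero : (Tri.iota (0 : A) : Tri S M A) = 0 := by ext <;> simp

lemma iota_one : (Tri.iota (1 : A) : Tri S M A) = Tri.eps := by ext <;> simp

@[simp] lemma eps_mul_iota (a : A) :
    (Tri.eps : Tri S M A) * Tri.iota a = Tri.iota a := by ext <;> simp

@[simp] lemma iota_mul_eps (a : A) :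
    (Tri.iota a : Tri S M A) * Tri.eps = Tri.iota a := by ext <;> simp

/-- The right ideal `εB` of `B = Tri S M A`, as a right `B`-module. -/
def epsRight : Submodule (Tri S M A)ᵐᵒᵖ (Tri S M A) where
  carrier := {x | Tri.eps * x = x}
  add_mem' := fun {a} {b} ha hb => by
    simp only [Set.mem_setOf_eq] at *
    rw [mul_add, ha, hb]
  zero_mem' := by simp
  smul_mem' := fun c {x} hx => by
    simp only [Set.mem_setOf_eq] at *
    rw [MulOpposite.smul_eq_mul_unop, ← mul_assoc, hx]

/-- The right ideal `(1-ε)B` of `B = Tri S M A`, as a right `B`-module. -/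
def oneEpsRight : Submodule (Tri S M A)ᵐᵒᵖ (Tri S M A) where
  carrier := {x | (1 - Tri.eps) * x = x}
  add_mem' := fun {a} {b} ha hb => by
    simp only [Set.mem_setOf_eq] at *
    rw [mul_add, ha, hb]
  zero_mem' := by simp
  smul_mem' := fun c {x} hx => by
    simp only [Set.mem_setOf_eq] at *
    rw [MulOpposite.smul_eq_mul_unop, ← mul_assoc, hx]

/-- The left ideal `Bε` of `B = Tri S M A`, as a left `B`-module. -/
def epsLeft : Submodule (Tri S M A) (Tri S M A) where
  carrier := {x | x * Tri.eps = x}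
  add_mem' := fun {a} {b} ha hb => by
    simp only [Set.mem_setOf_eq] at *
    rw [add_mul, ha, hb]
  zero_mem' := by simp
  smul_mem' := fun c {x} hx => by
    simp only [Set.mem_setOf_eq, smul_eq_mul] at *
    rw [mul_assoc, hx]

/-- The left `A`-action on `εB` via `a • x = ι(a) x`. -/
instance : Module A (epsRight S A M) where
  smul a x := ⟨Tri.iota a * x.val, by
    have hx := x.2
    simp only [epsRight, Submodule.mem_mk, AddSubmonoid.mem_mk, AddSubsemigroup.mem_mk,
      Set.mem_setOf_eq] at *
    rw [← mul_assoc, eps_mul_iota]⟩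
  one_smul x := Subtype.ext (by
    show Tri.iota 1 * x.val = x.val
    rw [iota_one]; exact x.2)
  mul_smul a b x := Subtype.ext (by
    show Tri.iota (a * b) * x.val = Tri.iota a * (Tri.iota b * x.val)
    rw [iota_mul, mul_assoc])
  smul_zero a := Subtype.ext (mul_zero _)
  smul_add a x y := Subtype.ext (mul_add _ _ _)
  add_smul a b x := Subtype.ext (by
    show Tri.iota (a + b) * x.val = Tri.iota a * x.val + Tri.iota b * x.val
    rw [iota_add, add_mul])
  zero_smul x := Subtype.ext (by
    show Tri.iota 0 * x.val = 0
    rw [iota_zero, zero_mul])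

lemma epsRight_smul_def (a : A) (x : epsRight S A M) :
    (a • x : epsRight S A M).val = Tri.iota a * x.val := rfl

/-- The right `A`-action on `Bε` via `x • a = x ι(a)`. -/
instance : Module Aᵐᵒᵖ (epsLeft S A M) where
  smul a x := ⟨x.val * Tri.iota a.unop, by
    have hx := x.2
    simp only [epsLeft, Submodule.mem_mk, AddSubmonoid.mem_mk, AddSubsemigroup.mem_mk,
      Set.mem_setOf_eq] at *
    rw [mul_assoc, iota_mul_eps]⟩
  one_smul x := Subtype.ext (by
    show x.val * Tri.iota (1 : A) = x.val
    rw [iota_one]; exact x.2)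
  mul_smul a b x := Subtype.ext (by
    show x.val * Tri.iota (b.unop * a.unop) = (x.val * Tri.iota b.unop) * Tri.iota a.unop
    rw [iota_mul, mul_assoc])
  smul_zero a := Subtype.ext (zero_mul _)
  smul_add a x y := Subtype.ext (add_mul _ _ _)
  add_smul a b x := Subtype.ext (by
    show x.val * Tri.iota (a.unop + b.unop) = x.val * Tri.iota a.unop + x.val * Tri.iota b.unop
    rw [iota_add, mul_add])
  zero_smul x := Subtype.ext (by
    show x.val * Tri.iota 0 = 0
    rw [iota_zero, mul_zero])

lemma epsLeft_smul_def (a : Aᵐᵒᵖ) (x : epsLeft S A M) :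
    (a • x : epsLeft S A M).val = x.val * Tri.iota a.unop := rfl

instance : SMulCommClass A (Tri S M A)ᵐᵒᵖ (epsRight S A M) :=
  ⟨fun a c x => Subtype.ext (by
    show Tri.iota a * (x.val * c.unop) = (Tri.iota a * x.val) * c.unop
    rw [mul_assoc])⟩

instance : SMulCommClass (Tri S M A)ᵐᵒᵖ A (epsRight S A M) := SMulCommClass.symm _ _ _

instance : SMulCommClass Aᵐᵒᵖ (Tri S M A) (epsLeft S A M) :=
  ⟨fun a c x => Subtype.ext (by
    show (c * x.val) * Tri.iota a.unop = c * (x.val * Tri.iota a.unop)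
    rw [mul_assoc])⟩

instance : SMulCommClass (Tri S M A) Aᵐᵒᵖ (epsLeft S A M) := SMulCommClass.symm _ _ _

end Corner

section Corner7

variable (k : Type u) [Field k]
variable (S : Type u) [Ring S] [Algebra k S] (A : Type u) [Ring A] [Algebra k A]
variable (M : Type u) [AddCommGroup M] [Module k M] [Module A M] [Module Sᵐᵒᵖ M]
variable [SMulCommClass A Sᵐᵒᵖ M] [IsScalarTower k A M] [IsScalarTower k Sᵐᵒᵖ M]

@[simp] lemma Tri.smul_s (c : k) (x : Tri S M A) : (c • x).s = c • x.s := by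
  show (Tri.algMap k c * x).s = c • x.s
  show algebraMap k S c * x.s = c • x.s
  rw [← Algebra.smul_def]

@[simp] lemma Tri.smul_m (c : k) (x : Tri S M A) : (c • x).m = c • x.m := by
  show (Tri.algMap k c * x).m = c • x.m
  show op x.s • (0 : M) + algebraMap k A c • x.m = c • x.m
  rw [smul_zero, zero_add, algebraMap_smul]

@[simp] lemma Tri.smul_a (c : k) (x : Tri S M A) : (c • x).a = c • x.a := by
  show (Tri.algMap k c * x).a = c • x.a
  show algebraMap k A c * x.a = c • x.a
  rw [← Algebra.smul_def]

/-- The embedding of `S` in the upper left corner. -/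
def iotaS (s : S) : Tri S M A := ⟨s, 0, 0⟩

@[simp] lemma iotaS_s (s : S) : (iotaS S A M s).s = s := rfl
@[simp] lemma iotaS_m (s : S) : (iotaS S A M s).m = 0 := rfl
@[simp] lemma iotaS_a (s : S) : (iotaS S A M s).a = 0 := rfl

@[simp] lemma iotaS_mul (s t : S) :
    iotaS S A M (s * t) = iotaS S A M s * iotaS S A M t := by ext <;> simp

@[simp] lemma iotaS_add (s t : S) :
    iotaS S A M (s + t) = iotaS S A M s + iotaS S A M t := by ext <;> simp

@[simp] lemma iotaS_zero : iotaS S A M (0 : S) = 0 := by ext <;> simp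

lemma iotaS_one : iotaS S A M (1 : S) = 1 - Tri.eps := by ext <;> simp

lemma iotaS_smul (c : k) (s : S) : iotaS S A M (c • s) = c • iotaS S A M s := by
  ext <;> simp

lemma oneEps_mul_iotaS (s : S) :
    (1 - Tri.eps : Tri S M A) * iotaS S A M s = iotaS S A M s := by ext <;> simp

lemma iotaS_mul_oneEps (s : S) :
    iotaS S A M s * (1 - Tri.eps : Tri S M A) = iotaS S A M s := by ext <;> simp

/-- The left `S`-action on `(1-ε)B` via `s • x = ι_S(s) x`. -/
instance : Module S (oneEpsRight S A M) where
  smul s x := ⟨iotaS S A M s * x.val, by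
    have hx := x.2
    simp only [oneEpsRight, Submodule.mem_mk, AddSubmonoid.mem_mk, AddSubsemigroup.mem_mk,
      Set.mem_setOf_eq] at *
    rw [← mul_assoc, oneEps_mul_iotaS]⟩
  one_smul x := Subtype.ext (by
    show iotaS S A M 1 * x.val = x.val
    rw [iotaS_one]; exact x.2)
  mul_smul s t x := Subtype.ext (by
    show iotaS S A M (s * t) * x.val = iotaS S A M s * (iotaS S A M t * x.val)
    rw [iotaS_mul, mul_assoc])
  smul_zero s := Subtype.ext (mul_zero _)
  smul_add s x y := Subtype.ext (mul_add _ _ _)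
  add_smul s t x := Subtype.ext (by
    show iotaS S A M (s + t) * x.val = iotaS S A M s * x.val + iotaS S A M t * x.val
    rw [iotaS_add, add_mul])
  zero_smul x := Subtype.ext (by
    show iotaS S A M 0 * x.val = 0
    rw [iotaS_zero, zero_mul])

lemma oneEpsRight_smul_def (s : S) (x : oneEpsRight S A M) :
    (s • x : oneEpsRight S A M).val = iotaS S A M s * x.val := rfl

instance : SMulCommClass S (Tri S M A)ᵐᵒᵖ (oneEpsRight S A M) :=
  ⟨fun s c x => Subtype.ext (by
    show iotaS S A M s * (x.val * c.unop) = (iotaS S A M s * x.val) * c.unop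
    rw [mul_assoc])⟩

instance : SMulCommClass (Tri S M A)ᵐᵒᵖ S (oneEpsRight S A M) := SMulCommClass.symm _ _ _

instance : IsScalarTower k S (oneEpsRight S A M) :=
  ⟨fun c s x => Subtype.ext (by
    show iotaS S A M (c • s) * x.val = c • (iotaS S A M s * x.val)
    rw [iotaS_smul, smul_mul_assoc])⟩

/-- The left ideal `B(1-ε)` of `B = Tri S M A`, as a left `B`-module. -/
def oneEpsLeft : Submodule (Tri S M A) (Tri S M A) where
  carrier := {x | x * (1 - Tri.eps) = x}
  add_mem' := fun {a} {b} ha hb => by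
    simp only [Set.mem_setOf_eq] at *
    rw [add_mul, ha, hb]
  zero_mem' := by simp
  smul_mem' := fun c {x} hx => by
    simp only [Set.mem_setOf_eq, smul_eq_mul] at *
    rw [mul_assoc, hx]

/-- The right `S`-action on `B(1-ε)` via `x • s = x ι_S(s)`. -/
instance : Module Sᵐᵒᵖ (oneEpsLeft S A M) where
  smul s x := ⟨x.val * iotaS S A M s.unop, by
    have hx := x.2
    simp only [oneEpsLeft, Submodule.mem_mk, AddSubmonoid.mem_mk, AddSubsemigroup.mem_mk,
      Set.mem_setOf_eq] at *
    rw [mul_assoc, iotaS_mul_oneEps]⟩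
  one_smul x := Subtype.ext (by
    show x.val * iotaS S A M 1 = x.val
    rw [iotaS_one]; exact x.2)
  mul_smul s t x := Subtype.ext (by
    show x.val * iotaS S A M (t.unop * s.unop) = (x.val * iotaS S A M t.unop) * iotaS S A M s.unop
    rw [iotaS_mul, mul_assoc])
  smul_zero s := Subtype.ext (zero_mul _)
  smul_add s x y := Subtype.ext (add_mul _ _ _)
  add_smul s t x := Subtype.ext (by
    show x.val * iotaS S A M (s.unop + t.unop) = x.val * iotaS S A M s.unop + x.val * iotaS S A M t.unop
    rw [iotaS_add, mul_add])
  zero_smul x := Subtype.ext (by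
    show x.val * iotaS S A M 0 = 0
    rw [iotaS_zero, mul_zero])

instance : SMulCommClass Sᵐᵒᵖ (Tri S M A) (oneEpsLeft S A M) :=
  ⟨fun s c x => Subtype.ext (by
    show (c * x.val) * iotaS S A M s.unop = c * (x.val * iotaS S A M s.unop)
    rw [mul_assoc])⟩

instance : SMulCommClass (Tri S M A) Sᵐᵒᵖ (oneEpsLeft S A M) := SMulCommClass.symm _ _ _

instance : IsScalarTower k Sᵐᵒᵖ (oneEpsLeft S A M) :=
  ⟨fun c s x => Subtype.ext (by
    show x.val * iotaS S A M (c • s).unop = c • (x.val * iotaS S A M s.unop)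
    rw [MulOpposite.unop_smul, iotaS_smul, mul_smul_comm])⟩

instance : IsScalarTower k Aᵐᵒᵖ (epsLeft S A M) :=
  ⟨fun c a x => Subtype.ext (by
    show x.val * Tri.iota (c • a).unop = c • (x.val * Tri.iota a.unop)
    have : (Tri.iota ((c • a).unop) : Tri S M A) = c • Tri.iota a.unop := by
      ext <;> simp [MulOpposite.unop_smul]
    rw [this, mul_smul_comm])⟩

instance : IsScalarTower k A (epsRight S A M) :=
  ⟨fun c a x => Subtype.ext (by
    show Tri.iota (c • a) * x.val = c • (Tri.iota a * x.val)
    have : (Tri.iota (c • a) : Tri S M A) = c • Tri.iota a := by ext <;> simp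
    rw [this, smul_mul_assoc])⟩

/-- The projection `B → A`, as a `k`-algebra homomorphism. -/
def projA : Tri S M A →ₐ[k] A where
  toFun x := x.a
  map_one' := rfl
  map_mul' x y := rfl
  map_zero' := rfl
  map_add' x y := rfl
  commutes' c := rfl

/-- The projection `B → S`, as a `k`-algebra homomorphism. -/
def projS : Tri S M A →ₐ[k] S where
  toFun x := x.s
  map_one' := rfl
  map_mul' x y := rfl
  map_zero' := rfl
  map_add' x y := rfl
  commutes' c := rfl

/-- The algebra homomorphism `Φ : B ⊗ Bᵒᵖ → A ⊗ Sᵒᵖ` along which the functor `F` is the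
restriction of scalars. -/
def Phi : (Tri S M A ⊗[k] (Tri S M A)ᵐᵒᵖ) →ₐ[k] (A ⊗[k] Sᵐᵒᵖ) :=
  Algebra.TensorProduct.map (projA k S A M) (AlgHom.op (projS k S A M))

end Corner7

attribute [local instance low] NC.leftModule NC.rightModule

section

open CategoryTheory

variable (k : Type u) [Field k]
variable (S : Type u) [Ring S] [Algebra k S] [FiniteDimensional k S]
variable (A : Type u) [Ring A] [Algebra k A] [FiniteDimensional k A]
variable (M : Type u) [AddCommGroup M] [Module k M] [Module A M] [Module Sᵐᵒᵖ M]
variable [SMulCommClass A Sᵐᵒᵖ M] [IsScalarTower k A M] [IsScalarTower k Sᵐᵒᵖ M]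
variable [FiniteDimensional k M]

/-- The functor `F` from `(A ⊗ Sᵒᵖ)`-modules to `(B ⊗ Bᵒᵖ)`-modules given by
restriction of scalars along `Φ`: it endows an `(A,S)`-bimodule `X` with the
`(B,B)`-bimodule structure `[[0,0],[X,0]]` via the projections `B → A` and `B → S`. -/
def Ffun : ModuleCat.{u} (A ⊗[k] Sᵐᵒᵖ) ⥤ ModuleCat.{u} (Tri S M A ⊗[k] (Tri S M A)ᵐᵒᵖ) :=
  ModuleCat.restrictScalars (Phi k S A M).toRingHom

end

/-!
`F` is restriction of scalars along `Φ : B ⊗ Bᵒᵖ → A ⊗ Sᵒᵖ`, hence exact. The map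
`a ⊗ s ↦ ι(a) ⊗ ι_S(s)` is a `(B ⊗ Bᵒᵖ)`-linear section of `Φ`, so `Φ` is surjective (which
makes `F` fully faithful) and `A ⊗ Sᵒᵖ` is a projective `(B ⊗ Bᵒᵖ)`-module. Then the right
adjoint of `F`, coextension of scalars `Hom(A ⊗ Sᵒᵖ, -)`, preserves epimorphisms, so `F`
preserves projectives. Finally `Bε ≅ A` as right `A`-modules and `(1-ε)B ≅ S` as left
`S`-modules, both free of rank one, so `Bε ⊗_A X ⊗_S (1-ε)B ≅ X`.
-/

namespace ModuleCat

open CategoryTheory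

variable {R S : Type u} [Ring R] [Ring S] (f : R →+* S)

lemma restrictScalars_full_of_surjective (hf : Function.Surjective f) :
    (restrictScalars.{u} f).Full where
  map_surjective g := ⟨ofHom { g.hom with
    map_smul' := fun s x => by obtain ⟨r, rfl⟩ := hf s; exact g.hom.map_smul r x }, rfl⟩

lemma projective_restrictScalars_obj_self (g : S →+ R) (hg : ∀ r s, g (f r * s) = r * g s)
    (hfg : ∀ s, f (g s) = s) : Module.Projective R ((restrictScalars.{u} f).obj (of S S)) :=
  Module.Projective.of_split (M := R) { g with map_smul' := hg }
    { toFun := f, map_add' := map_add f, map_smul' := map_mul f } (LinearMap.ext hfg)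

lemma projective_restrictScalars_obj [Module.Projective R ((restrictScalars.{u} f).obj (of S S))]
    {P : ModuleCat.{u} S} (hP : Projective P) : Projective ((restrictScalars f).obj P) :=
  have : (coextendScalars.{u} f).PreservesEpimorphisms :=
    ⟨fun g hg => (epi_iff_surjective _).mpr fun h =>
      Module.projective_lifting_property g.hom h ((epi_iff_surjective g).mp hg)⟩
  (restrictCoextendScalarsAdj f).map_projective P hP

end ModuleCat

namespace NC

universe v

section Generator

variable {k : Type*} [CommRing k] {B : Type u} [Ring B] [Algebra k B]
variable {M N : Type v} [AddCommGroup M] [AddCommGroup N] [Module k M] [Module k N]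
variable [Module Bᵐᵒᵖ M] [Module B N]

/-- `ρ` and `m₀` exhibit `M` as a free right `B`-module of rank one. -/
def lidOfGenerator [IsScalarTower k B N] (ρ : M →ₗ[k] B) (m₀ : M)
    (hρ : ∀ (b : B) (m : M), ρ (op b • m) = ρ m * b) (hρm₀ : ρ m₀ = 1)
    (hm₀ : ∀ m, op (ρ m) • m₀ = m) : Tensor k B M N ≃ₗ[k] N :=
  LinearEquiv.ofLinearMap
    (lift k B ((Algebra.lsmul k k N).toLinearMap ∘ₗ ρ) fun b m n =>
      show ρ (op b • m) • n = ρ m • b • n by rw [hρ, mul_smul])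
    ((rel k B M N).mkQ ∘ₗ TensorProduct.mk k M N m₀)
    (LinearMap.ext fun n => show ρ m₀ • n = n by rw [hρm₀, one_smul])
    (Submodule.linearMap_qext _ <| TensorProduct.ext' fun m n =>
      show mk k B m₀ (ρ m • n) = mk k B m n by rw [← mk_balanced, hm₀])

def ridOfGenerator [IsScalarTower k Bᵐᵒᵖ M] (ρ : N →ₗ[k] B) (n₀ : N)
    (hρ : ∀ (b : B) (n : N), ρ (b • n) = b * ρ n) (hρn₀ : ρ n₀ = 1)
    (hn₀ : ∀ n, ρ n • n₀ = n) : Tensor k B M N ≃ₗ[k] M :=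
  LinearEquiv.ofLinearMap
    (lift k B ((Algebra.lsmul k k M).toLinearMap ∘ₗ
        (opLinearEquiv k : B ≃ₗ[k] Bᵐᵒᵖ).toLinearMap ∘ₗ ρ).flip
      fun b m n => show op (ρ n) • op b • m = op (ρ (b • n)) • m by rw [hρ, op_mul, mul_smul])
    ((rel k B M N).mkQ ∘ₗ (TensorProduct.mk k M N).flip n₀)
    (LinearMap.ext fun m => show op (ρ n₀) • m = m by rw [hρn₀, op_one, one_smul])
    (Submodule.linearMap_qext _ <| TensorProduct.ext' fun m n =>
      show mk k B (op (ρ n) • m) n₀ = mk k B m n by rw [mk_balanced, hn₀])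

end Generator

section Iterated

variable {k : Type*} [CommRing k] {B C : Type u} [Ring B] [Ring C]
variable {M N P : Type v} [AddCommGroup M] [AddCommGroup N] [AddCommGroup P]
variable [Module k M] [Module k N] [Module k P] [Module Bᵐᵒᵖ M] [Module B N] [Module C P]
variable [Module Cᵐᵒᵖ N] [SMulCommClass Cᵐᵒᵖ B N] [SMulCommClass Cᵐᵒᵖ k N]

lemma induction_on_mk_mk {p : Tensor k C (Tensor k B M N) P → Prop}
    (t : Tensor k C (Tensor k B M N) P) (zero : p 0)
    (basic : ∀ m n q, p (mk k C (mk k B m n) q)) (add : ∀ x y, p x → p y → p (x + y)) : p t := by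
  induction t using induction_on with
  | zero => exact zero
  | add x y hx hy => exact add x y hx hy
  | basic m q =>
    induction m using induction_on with
    | zero => rw [mk_zero_left]; exact zero
    | basic m n => exact basic m n q
    | add x y hx hy => rw [mk_add_left]; exact add _ _ hx hy

end Iterated

end NC

section CornerTensor

variable (k : Type u) [Field k]
variable (S : Type u) [Ring S] [Algebra k S] (A : Type u) [Ring A] [Algebra k A]
variable (M : Type u) [AddCommGroup M] [Module k M] [Module A M] [Module Sᵐᵒᵖ M]
variable [SMulCommClass A Sᵐᵒᵖ M] [IsScalarTower k A M] [IsScalarTower k Sᵐᵒᵖ M]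

@[simp] lemma projA_apply (x : Tri S M A) : projA k S A M x = x.a := rfl

@[simp] lemma projS_apply (x : Tri S M A) : projS k S A M x = x.s := rfl

def iotaLinearMap : A →ₗ[k] Tri S M A where
  toFun := Tri.iota
  map_add' := iota_add S A M
  map_smul' c a := by ext <;> simp

def iotaSLinearMap : S →ₗ[k] Tri S M A where
  toFun := iotaS S A M
  map_add' := iotaS_add S A M
  map_smul' := iotaS_smul k S A M

def phiSection : A ⊗[k] Sᵐᵒᵖ →ₗ[k] Tri S M A ⊗[k] (Tri S M A)ᵐᵒᵖ :=
  TensorProduct.map (iotaLinearMap k S A M)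
    ((opLinearEquiv k).toLinearMap ∘ₗ iotaSLinearMap k S A M ∘ₗ (opLinearEquiv k).symm.toLinearMap)

lemma phiSection_tmul (a : A) (s : Sᵐᵒᵖ) :
    phiSection k S A M (a ⊗ₜ s) = Tri.iota a ⊗ₜ op (iotaS S A M s.unop) := rfl

lemma Phi_phiSection (r : A ⊗[k] Sᵐᵒᵖ) : Phi k S A M (phiSection k S A M r) = r := by
  induction r using TensorProduct.induction_on with
  | zero => rw [map_zero, map_zero]
  | tmul a s => rw [phiSection_tmul, Phi, Algebra.TensorProduct.map_tmul]; rfl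
  | add x y hx hy => rw [map_add, map_add, hx, hy]

lemma phiSection_Phi_mul (t : Tri S M A ⊗[k] (Tri S M A)ᵐᵒᵖ) (r : A ⊗[k] Sᵐᵒᵖ) :
    phiSection k S A M (Phi k S A M t * r) = t * phiSection k S A M r := by
  induction t using TensorProduct.induction_on with
  | zero => rw [map_zero, zero_mul, map_zero, zero_mul]
  | add x y hx hy => rw [map_add, add_mul, map_add, hx, hy, add_mul]
  | tmul b c =>
    induction r using TensorProduct.induction_on with
    | zero => rw [mul_zero, map_zero, mul_zero]
    | add x y hx hy => rw [mul_add, map_add, hx, hy, map_add, mul_add]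
    | tmul a s =>
      rw [Phi, Algebra.TensorProduct.map_tmul, Algebra.TensorProduct.tmul_mul_tmul,
        phiSection_tmul, phiSection_tmul, Algebra.TensorProduct.tmul_mul_tmul]
      congr 1
      · ext <;> simp
      · apply MulOpposite.unop_injective
        ext <;> simp

variable (X : Type u) [AddCommGroup X] [Module k X] [Module A X] [Module Sᵐᵒᵖ X]
  [SMulCommClass Sᵐᵒᵖ A X] [IsScalarTower k A X] [IsScalarTower k Sᵐᵒᵖ X]

lemma coe_epsLeft_eq_iota (u : epsLeft S A M) : (u : Tri S M A) = Tri.iota u.val.a :=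
  calc u.val = u.val * Tri.eps := u.2.symm
    _ = Tri.iota u.val.a := by ext <;> simp

lemma coe_oneEpsRight_eq_iotaS (v : oneEpsRight S A M) : (v : Tri S M A) = iotaS S A M v.val.s :=
  calc v.val = (1 - Tri.eps) * v.val := v.2.symm
    _ = iotaS S A M v.val.s := by ext <;> simp

def epsLeftCoord : epsLeft S A M →ₗ[k] A where
  toFun u := u.val.a
  map_add' _ _ := rfl
  map_smul' c u := Tri.smul_a k S A M c u.val

def oneEpsRightCoord : oneEpsRight S A M →ₗ[k] S where
  toFun v := v.val.s
  map_add' _ _ := rfl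
  map_smul' c v := Tri.smul_s k S A M c v.val

def epsLeftTensorEquiv : NC.Tensor k A (epsLeft S A M) X ≃ₗ[k] X :=
  NC.lidOfGenerator (epsLeftCoord k S A M) ⟨Tri.eps, Tri.eps_idem⟩ (fun _ _ => rfl) rfl
    fun u => Subtype.ext ((eps_mul_iota S A M _).trans (coe_epsLeft_eq_iota S A M u).symm)

def cornerTensorEquiv :
    NC.Tensor k S (NC.Tensor k A (epsLeft S A M) X) (oneEpsRight S A M) ≃ₗ[k] X :=
  (NC.ridOfGenerator (oneEpsRightCoord k S A M) ⟨1 - Tri.eps, by ext <;> simp⟩ (fun _ _ => rfl)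
    (by simp [oneEpsRightCoord]) fun v => Subtype.ext
      ((iotaS_mul_oneEps S A M _).trans (coe_oneEpsRight_eq_iotaS S A M v).symm)).trans
    (epsLeftTensorEquiv k S A M X)

lemma cornerTensorEquiv_mk (u : epsLeft S A M) (x : X) (v : oneEpsRight S A M) :
    cornerTensorEquiv k S A M X (NC.mk k S (NC.mk k A u x) v) = u.val.a • op v.val.s • x :=
  rfl

lemma cornerTensorEquiv_smul (b : Tri S M A)
    (t : NC.Tensor k S (NC.Tensor k A (epsLeft S A M) X) (oneEpsRight S A M)) :
    cornerTensorEquiv k S A M X (b • t) = b.a • cornerTensorEquiv k S A M X t := by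
  induction t using NC.induction_on_mk_mk with
  | zero => rw [smul_zero, map_zero, smul_zero]
  | basic u x v =>
    show cornerTensorEquiv k S A M X (NC.mk k S (NC.mk k A (b • u) x) v) = _
    rw [cornerTensorEquiv_mk, cornerTensorEquiv_mk, ← mul_smul]
    rfl
  | add x y hx hy => rw [smul_add, map_add, map_add, hx, hy, smul_add]

lemma cornerTensorEquiv_op_smul (b : Tri S M A)
    (t : NC.Tensor k S (NC.Tensor k A (epsLeft S A M) X) (oneEpsRight S A M)) :
    cornerTensorEquiv k S A M X (op b • t) = op b.s • cornerTensorEquiv k S A M X t := by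
  induction t using NC.induction_on_mk_mk with
  | zero => rw [smul_zero, map_zero, smul_zero]
  | basic u x v =>
    show cornerTensorEquiv k S A M X (NC.mk k S (NC.mk k A u x) (op b • v)) = _
    rw [cornerTensorEquiv_mk, cornerTensorEquiv_mk, smul_comm (op b.s), ← mul_smul, ← op_mul]
    rfl
  | add x y hx hy => rw [smul_add, map_add, map_add, hx, hy, smul_add]

lemma cornerTensorEquiv_mk_map (Y : Type u) [AddCommGroup Y] [Module k Y] [Module A Y]
    [Module Sᵐᵒᵖ Y] [SMulCommClass Sᵐᵒᵖ A Y] [IsScalarTower k A Y] [IsScalarTower k Sᵐᵒᵖ Y]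
    (f : X →+ Y) (hA : ∀ (a : A) (x : X), f (a • x) = a • f x)
    (hS : ∀ (s : Sᵐᵒᵖ) (x : X), f (s • x) = s • f x)
    (u : epsLeft S A M) (x : X) (v : oneEpsRight S A M) :
    cornerTensorEquiv k S A M Y (NC.mk k S (NC.mk k A u (f x)) v) =
      f (cornerTensorEquiv k S A M X (NC.mk k S (NC.mk k A u x) v)) := by
  rw [cornerTensorEquiv_mk, cornerTensorEquiv_mk, hA, hS]

end CornerTensor

section

open CategoryTheory

variable (k : Type u) [Field k]
variable (S : Type u) [Ring S] [Algebra k S] [FiniteDimensional k S]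
variable (A : Type u) [Ring A] [Algebra k A] [FiniteDimensional k A]
variable (M : Type u) [AddCommGroup M] [Module k M] [Module A M] [Module Sᵐᵒᵖ M]
variable [SMulCommClass A Sᵐᵒᵖ M] [IsScalarTower k A M] [IsScalarTower k Sᵐᵒᵖ M]
variable [FiniteDimensional k M]

/-- The functor `F` sending an `(A,S)`-bimodule `X` to the
`(B,B)`-bimodule `[[0,0],[X,0]]` is naturally isomorphic to
`Bε ⊗_A (−) ⊗_S (1−ε)B`; it is exact, fully faithful, and sends projective objects to
projective objects. -/
theorem stmt7 :
    Nonempty (Limits.PreservesFiniteLimits (Ffun k S A M)) ∧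
    Nonempty (Limits.PreservesFiniteColimits (Ffun k S A M)) ∧
    Nonempty (Ffun k S A M).FullyFaithful ∧
    (∀ P : ModuleCat.{u} (A ⊗[k] Sᵐᵒᵖ),
      Projective P → Projective ((Ffun k S A M).obj P)) ∧
    ∃ η : ∀ (X : Type u) [AddCommGroup X] [Module k X] [Module A X] [Module Sᵐᵒᵖ X] [SMulCommClass A Sᵐᵒᵖ X] [SMulCommClass Sᵐᵒᵖ A X] [IsScalarTower k A X] [IsScalarTower k Sᵐᵒᵖ X],
        NC.Tensor k S (NC.Tensor k A (epsLeft S A M) X) (oneEpsRight S A M) ≃+ X,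
      (∀ (X : Type u) [AddCommGroup X] [Module k X] [Module A X] [Module Sᵐᵒᵖ X] [SMulCommClass A Sᵐᵒᵖ X] [SMulCommClass Sᵐᵒᵖ A X] [IsScalarTower k A X] [IsScalarTower k Sᵐᵒᵖ X] (b : Tri S M A)
          (t : NC.Tensor k S (NC.Tensor k A (epsLeft S A M) X) (oneEpsRight S A M)),
        η X (b • t) = b.a • η X t) ∧
      (∀ (X : Type u) [AddCommGroup X] [Module k X] [Module A X] [Module Sᵐᵒᵖ X] [SMulCommClass A Sᵐᵒᵖ X] [SMulCommClass Sᵐᵒᵖ A X] [IsScalarTower k A X] [IsScalarTower k Sᵐᵒᵖ X] (b : Tri S M A)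
          (t : NC.Tensor k S (NC.Tensor k A (epsLeft S A M) X) (oneEpsRight S A M)),
        η X (op b • t) = op b.s • η X t) ∧
      (∀ (X : Type u) [AddCommGroup X] [Module k X] [Module A X] [Module Sᵐᵒᵖ X] [SMulCommClass A Sᵐᵒᵖ X] [SMulCommClass Sᵐᵒᵖ A X] [IsScalarTower k A X] [IsScalarTower k Sᵐᵒᵖ X] (Y : Type u) [AddCommGroup Y] [Module k Y] [Module A Y] [Module Sᵐᵒᵖ Y] [SMulCommClass A Sᵐᵒᵖ Y] [SMulCommClass Sᵐᵒᵖ A Y] [IsScalarTower k A Y] [IsScalarTower k Sᵐᵒᵖ Y]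
          (f : X →+ Y),
        (∀ (a : A) (x : X), f (a • x) = a • f x) →
        (∀ (s : Sᵐᵒᵖ) (x : X), f (s • x) = s • f x) →
        ∀ (u : epsLeft S A M) (x : X) (v : oneEpsRight S A M),
          η Y (NC.mk k S (NC.mk k A u (f x)) v) = f (η X (NC.mk k S (NC.mk k A u x) v))) := by
  let Φ := (Phi k S A M).toRingHom
  have : Module.Projective (Tri S M A ⊗[k] (Tri S M A)ᵐᵒᵖ)
      ((ModuleCat.restrictScalars Φ).obj (ModuleCat.of _ (A ⊗[k] Sᵐᵒᵖ))) :=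
    ModuleCat.projective_restrictScalars_obj_self Φ (phiSection k S A M).toAddMonoidHom
      (phiSection_Phi_mul k S A M) (Phi_phiSection k S A M)
  have : (ModuleCat.restrictScalars Φ).Full := ModuleCat.restrictScalars_full_of_surjective Φ
    (Function.LeftInverse.surjective (Phi_phiSection k S A M))
  refine ⟨⟨⟨fun _ _ _ => ⟨fun {F} => ModuleCat.preservesLimit_restrictScalars Φ F⟩⟩⟩,
    ⟨⟨fun _ _ _ => ⟨fun {F} => ModuleCat.preservesColimit_restrictScalars Φ F⟩⟩⟩,
    ⟨.ofFullyFaithful (ModuleCat.restrictScalars Φ)⟩,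
    fun _ hP => ModuleCat.projective_restrictScalars_obj Φ hP,
    fun X _ _ _ _ _ _ _ _ => (cornerTensorEquiv k S A M X).toAddEquiv,
    fun X _ _ _ _ _ _ _ _ => cornerTensorEquiv_smul k S A M X,
    fun X _ _ _ _ _ _ _ _ => cornerTensorEquiv_op_smul k S A M X,
    fun X _ _ _ _ _ _ _ _ Y _ _ _ _ _ _ _ _ => cornerTensorEquiv_mk_map k S A M X Y⟩

end
end
end

section
/- Let A be a k-algebra finitely generated projective over k, P a projective (A,A)-bimodule (that is, a projective A⊗A^op-module), and Y a left A-module. Then Hom_A(P, Y) (left A-module homomorphisms, with A-module structure via the right A-action on P) is an injective left A-module. -/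
/-!
For an `A`-module `X`, `Hom_k(X, Y)` is an `(A, A)`-bimodule, and `A`-linear maps
`X → Hom_A(P, Y)` correspond to bimodule maps `P → Hom_k(X, Y)` by swapping the arguments.
Over a field an injection `X ↪ X'` splits `k`-linearly, so restriction
`Hom_k(X', Y) → Hom_k(X, Y)` is a surjection of bimodules; a bimodule map from the projective `P`
lifts along it, and swapping back extends a map `X → Hom_A(P, Y)` to `X'`.
-/

set_option linter.unusedSectionVars false
set_option maxHeartbeats 1000000
set_option synthInstance.maxHeartbeats 400000

open MulOpposite
open scoped TensorProduct

universe u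

noncomputable section

section HomLeftModule

variable (R C : Type u) [Ring R] [Ring C]
variable (X : Type u) [AddCommGroup X] [Module R X] [Module Cᵐᵒᵖ X] [SMulCommClass Cᵐᵒᵖ R X]
variable (Y : Type u) [AddCommGroup Y] [Module R Y]

/-- Right multiplication by `c : C` on `X`, as an `R`-linear endomorphism. -/
def opSmul (c : C) : X →ₗ[R] X where
  toFun x := op c • x
  map_add' := smul_add (op c)
  map_smul' r x := (smul_comm (op c) r x)

/-- The left `C`-module structure on `Hom_R(X, Y)` induced by the right `C`-action
on the domain `X`, i.e. `(c • f) x = f (x · c)`. -/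
def homLeftModule : Module C (X →ₗ[R] Y) where
  smul c f := f.comp (opSmul R C X c)
  one_smul f := by
    ext x
    show f (op (1 : C) • x) = f x
    rw [op_one, one_smul]
  mul_smul c c' f := by
    ext x
    show f (op (c * c') • x) = f (op c' • op c • x)
    rw [op_mul, mul_smul]
  smul_zero c := by ext x; rfl
  smul_add c f g := by ext x; rfl
  add_smul c c' f := by
    ext x
    show f (op (c + c') • x) = f (op c • x) + f (op c' • x)
    rw [op_add, add_smul, map_add]
  zero_smul f := by
    ext x
    show f (op (0 : C) • x) = 0
    rw [op_zero, zero_smul, map_zero]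

end HomLeftModule

section TensorLinear

variable {k A B F G : Type*} [CommSemiring k] [Semiring A] [Semiring B] [Algebra k A] [Algebra k B]
  [AddCommMonoid F] [Module (A ⊗[k] B) F] [AddCommMonoid G] [Module (A ⊗[k] B) G]

def AddMonoidHom.toTensorLinearMap (φ : F →+ G)
    (hφ : ∀ (a : A) (b : B) (x : F), φ ((a ⊗ₜ[k] b) • x) = (a ⊗ₜ[k] b) • φ x) :
    F →ₗ[A ⊗[k] B] G where
  toFun := φ
  map_add' := φ.map_add
  map_smul' e x := by
    rw [RingHom.id_apply]
    induction e using TensorProduct.induction_on with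
    | zero => rw [zero_smul, zero_smul, map_zero]
    | tmul a b => exact hφ a b x
    | add e₁ e₂ h₁ h₂ => rw [add_smul, add_smul, map_add, h₁, h₂]

end TensorLinear

section HomBimodule

variable {k A : Type*} [CommRing k] [Ring A] [Algebra k A]
variable {M N : Type*} [AddCommGroup M] [Module k M] [Module A M] [IsScalarTower k A M]
  [AddCommGroup N] [Module k N]

/-- `Aᵈᵐᵃ` is `Aᵐᵒᵖ`, so the `DomMulAct` action `(op a • f) x = f (a • x)` is a right `A`-action. -/
abbrev homOpModule : Module Aᵐᵒᵖ (M →ₗ[k] N) := inferInstanceAs (Module Aᵈᵐᵃ (M →ₗ[k] N))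

attribute [local instance] homOpModule

theorem homOpModule_smul_apply (b : Aᵐᵒᵖ) (f : M →ₗ[k] N) (x : M) : (b • f) x = f (unop b • x) :=
  rfl

instance : IsScalarTower k Aᵐᵒᵖ (M →ₗ[k] N) where
  smul_assoc c b f := LinearMap.ext fun x => by
    simp only [LinearMap.smul_apply, homOpModule_smul_apply, unop_smul, smul_assoc, map_smul]

variable [Module A N] [IsScalarTower k A N]

instance : SMulCommClass A Aᵐᵒᵖ (M →ₗ[k] N) where
  smul_comm _ _ _ := rfl

abbrev homBimodule : Module (A ⊗[k] Aᵐᵒᵖ) (M →ₗ[k] N) := TensorProduct.Algebra.module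

attribute [local instance] homBimodule

theorem homBimodule_tmul_smul_apply (a : A) (b : Aᵐᵒᵖ) (f : M →ₗ[k] N) (x : M) :
    ((a ⊗ₜ[k] b) • f) x = a • f (unop b • x) :=
  rfl

variable {M' : Type*} [AddCommGroup M'] [Module k M'] [Module A M'] [IsScalarTower k A M']

def lcompBimodule (i : M →ₗ[A] M') : (M' →ₗ[k] N) →ₗ[A ⊗[k] Aᵐᵒᵖ] (M →ₗ[k] N) :=
  (LinearMap.lcomp k N (i.restrictScalars k)).toAddMonoidHom.toTensorLinearMap fun a b h =>
    LinearMap.ext fun x => congrArg (a • h ·) (i.map_smul (unop b) x).symm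

end HomBimodule

section Field

attribute [local instance] homOpModule homBimodule

variable {k A : Type*} [Field k] [Ring A] [Algebra k A]
  {M M' N : Type*} [AddCommGroup M] [Module k M] [Module A M] [IsScalarTower k A M]
  [AddCommGroup M'] [Module k M'] [Module A M'] [IsScalarTower k A M']
  [AddCommGroup N] [Module k N] [Module A N] [IsScalarTower k A N]

theorem lcompBimodule_surjective {i : M →ₗ[A] M'} (hi : Function.Injective i) :
    Function.Surjective (lcompBimodule (k := k) (N := N) i) := by
  obtain ⟨r, hr⟩ :=
    (i.restrictScalars k).exists_leftInverse_of_injective (LinearMap.ker_eq_bot.mpr hi)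
  exact fun h => ⟨h ∘ₗ r, LinearMap.ext fun x => congrArg h (LinearMap.congr_fun hr x)⟩

end Field

class IsEnvelopingAction (k A P : Type*) [CommRing k] [Ring A] [Algebra k A] [AddCommGroup P]
    [Module (A ⊗[k] Aᵐᵒᵖ) P] [Module A P] [Module Aᵐᵒᵖ P] : Prop where
  tmul_one_smul (a : A) (p : P) : (a ⊗ₜ[k] (1 : Aᵐᵒᵖ)) • p = a • p
  one_tmul_smul (b : Aᵐᵒᵖ) (p : P) : ((1 : A) ⊗ₜ[k] b) • p = b • p

namespace IsEnvelopingAction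

variable (k : Type*) {A P : Type*} [CommRing k] [Ring A] [Algebra k A] [AddCommGroup P]
  [Module (A ⊗[k] Aᵐᵒᵖ) P] [Module A P] [Module Aᵐᵒᵖ P]

theorem tmul_smul [IsEnvelopingAction k A P] (a : A) (b : Aᵐᵒᵖ) (p : P) :
    (a ⊗ₜ[k] b) • p = a • b • p := by
  rw [← one_tmul_smul (k := k) b, ← tmul_one_smul (k := k) a, ← mul_smul,
    Algebra.TensorProduct.tmul_mul_tmul, mul_one, one_mul]

theorem op_algebraMap_smul [IsEnvelopingAction k A P] (c : k) (p : P) :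
    op (algebraMap k A c) • p = algebraMap k A c • p := by
  rw [← tmul_one_smul (k := k) (algebraMap k A c), ← one_tmul_smul (k := k) (op (algebraMap k A c)),
    ← MulOpposite.algebraMap_apply, ← Algebra.TensorProduct.algebraMap_apply,
    ← Algebra.TensorProduct.algebraMap_apply']

theorem smulCommClass [IsEnvelopingAction k A P] : SMulCommClass Aᵐᵒᵖ A P where
  smul_comm b a p := by
    rw [← tmul_smul k, ← tmul_one_smul (k := k) a, ← one_tmul_smul (k := k) b, ← mul_smul,
      Algebra.TensorProduct.tmul_mul_tmul, one_mul, mul_one]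

end IsEnvelopingAction

section Adjunction

attribute [local instance] homOpModule homBimodule homLeftModule

variable {k : Type*} {A : Type u} [CommRing k] [Ring A] [Algebra k A]
  {P : Type u} [AddCommGroup P] [Module (A ⊗[k] Aᵐᵒᵖ) P] [Module A P] [Module Aᵐᵒᵖ P]
  [IsEnvelopingAction k A P]
  {X : Type*} {Y : Type u} [AddCommGroup X] [Module k X] [Module A X] [IsScalarTower k A X]
  [AddCommGroup Y] [Module k Y] [Module A Y] [IsScalarTower k A Y]

variable [SMulCommClass Aᵐᵒᵖ A P]

theorem homLeftModule_smul_apply (a : A) (f : P →ₗ[A] Y) (p : P) : (a • f) p = f (op a • p) :=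
  rfl

def flipToBimodule (f : X →ₗ[A] (P →ₗ[A] Y)) : P →ₗ[A ⊗[k] Aᵐᵒᵖ] (X →ₗ[k] Y) :=
  AddMonoidHom.toTensorLinearMap
    { toFun p :=
        { toFun x := f x p
          map_add' x y := by rw [map_add, LinearMap.add_apply]
          map_smul' c x := by
            rw [RingHom.id_apply, ← algebraMap_smul A c x, map_smul, homLeftModule_smul_apply,
              IsEnvelopingAction.op_algebraMap_smul k, map_smul, algebraMap_smul] }
      map_zero' := LinearMap.ext fun x => map_zero (f x)
      map_add' p q := LinearMap.ext fun x => map_add (f x) p q }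
    fun a b p => LinearMap.ext fun x => by
      show f x ((a ⊗ₜ[k] b) • p) = a • f (unop b • x) p
      rw [IsEnvelopingAction.tmul_smul k, (f x).map_smul, f.map_smul, homLeftModule_smul_apply,
        op_unop]

def flipFromBimodule (β : P →ₗ[A ⊗[k] Aᵐᵒᵖ] (X →ₗ[k] Y)) : X →ₗ[A] (P →ₗ[A] Y) where
  toFun x :=
    { toFun p := β p x
      map_add' p q := by rw [map_add, LinearMap.add_apply]
      map_smul' a p := by
        rw [RingHom.id_apply, ← IsEnvelopingAction.tmul_one_smul (k := k) a, map_smul,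
          homBimodule_tmul_smul_apply, unop_one, one_smul] }
  map_add' x y := LinearMap.ext fun p => map_add (β p) x y
  map_smul' a x := LinearMap.ext fun p => by
    show β p (a • x) = β (op a • p) x
    rw [← IsEnvelopingAction.one_tmul_smul (k := k) (op a), β.map_smul,
      homBimodule_tmul_smul_apply, unop_op, one_smul]

end Adjunction

section Injective

attribute [local instance] homOpModule homBimodule homLeftModule

variable {k : Type*} {A : Type u} [Field k] [Ring A] [Algebra k A]
  {P : Type u} [AddCommGroup P] [Module (A ⊗[k] Aᵐᵒᵖ) P] [Module A P] [Module Aᵐᵒᵖ P]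
  [IsEnvelopingAction k A P] [SMulCommClass Aᵐᵒᵖ A P]
  {Y : Type u} [AddCommGroup Y] [Module k Y] [Module A Y] [IsScalarTower k A Y]

variable (k) in
theorem injective_homLeftModule_of_projective [Module.Projective (A ⊗[k] Aᵐᵒᵖ) P] :
    Module.Injective A (P →ₗ[A] Y) :=
  Module.Baer.injective fun I g => by
    obtain ⟨β, hβ⟩ := Module.projective_lifting_property (lcompBimodule (k := k) I.subtype)
      (flipToBimodule g) (lcompBimodule_surjective Subtype.val_injective)
    exact ⟨flipFromBimodule β, fun x hx => LinearMap.ext fun p =>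
      LinearMap.congr_fun (LinearMap.congr_fun hβ p) ⟨x, hx⟩⟩

end Injective

section

variable (k : Type u) [Field k] (A : Type u) [Ring A] [Algebra k A] [FiniteDimensional k A]
variable (P : Type u) [AddCommGroup P] [Module (A ⊗[k] Aᵐᵒᵖ) P]

/-- The left `A`-module structure on an `(A,A)`-bimodule. -/
def leftFromEnv : Module A P :=
  Module.compHom P (Algebra.TensorProduct.includeLeftRingHom : A →+* A ⊗[k] Aᵐᵒᵖ)

/-- The right `A`-module structure on an `(A,A)`-bimodule. -/
def rightFromEnv : Module Aᵐᵒᵖ P :=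
  Module.compHom P (Algebra.TensorProduct.includeRight : Aᵐᵒᵖ →ₐ[k] A ⊗[k] Aᵐᵒᵖ).toRingHom

variable (Y : Type u) [AddCommGroup Y] [Module A Y]

/-- Let `k` be a field, `A` a finite-dimensional `k`-algebra, `P` a
projective `(A,A)`-bimodule (i.e. a projective `A ⊗ Aᵒᵖ`-module) and `Y` a left `A`-module.
Then `Hom_A(P, Y)` (left `A`-module homomorphisms, with `A`-module structure via the right
`A`-action on `P`) is an injective left `A`-module. -/
theorem stmt13 (hP : Module.Projective (A ⊗[k] Aᵐᵒᵖ) P) :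
    letI : Module A P := leftFromEnv k A P
    letI : Module Aᵐᵒᵖ P := rightFromEnv k A P
    letI : SMulCommClass Aᵐᵒᵖ A P := ⟨fun a b p => by
        show ((1 : A) ⊗ₜ[k] a) • (b ⊗ₜ[k] (1 : Aᵐᵒᵖ)) • p
            = (b ⊗ₜ[k] (1 : Aᵐᵒᵖ)) • ((1 : A) ⊗ₜ[k] a) • p
        rw [← mul_smul, ← mul_smul, Algebra.TensorProduct.tmul_mul_tmul,
          Algebra.TensorProduct.tmul_mul_tmul, one_mul, mul_one, one_mul, mul_one]⟩
    letI : Module A (P →ₗ[A] Y) := homLeftModule A A P Y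
    Module.Injective A (P →ₗ[A] Y) := by
  let := leftFromEnv k A P
  let := rightFromEnv k A P
  have : IsEnvelopingAction k A P := ⟨fun _ _ => rfl, fun _ _ => rfl⟩
  have : SMulCommClass Aᵐᵒᵖ A P := IsEnvelopingAction.smulCommClass k
  let : Module k Y := Module.compHom Y (algebraMap k A)
  have : IsScalarTower k A Y := IsScalarTower.of_compHom k A Y
  exact injective_homLeftModule_of_projective k

end
end
end
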